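/- arXiv:2007.11944 — 7 statements merged into one kernel-verified Lean document; each statement's English description precedes it below -/
import Mathlib

section
/- Let n ≥ 1, let A : ℝⁿ → Matrix (Fin n) (Fin n) ℝ, V : ℝⁿ → ℝ be smooth, and let K₂ : ℝ × ℝⁿ → (Fin n → Fin n → ℝ) (symmetric in its two indices), K₁ : ℝ × ℝⁿ → (Fin n → ℝ), K₀ : ℝ × ℝⁿ → ℝ be smooth. Assume for all (t,q) and all indices a,b,c: (i) ∂_c K₂_{ab} + ∂_a K₂_{bc} + ∂_b K₂_{ca} = 0; (ii) ∂_t K₂_{ab} + ½(∂_a K₁_b + ∂_b K₁_a) + K₂_{cb} A^c_a + K₂_{ca} A^c_b = 0 (summed over c); (iii) −2 K₂_{ab} ∂_b V + ∂_t K₁_a + ∂_a K₀ + K₁_b A^b_a = 0 (summed over b); (iv) ∂_t K₀ − K₁_a ∂_a V = 0 (summed over a). Then for every twice-differentiable curve q : ℝ → ℝⁿ satisfying q̈^a(t) = A^a_b(q(t)) q̇^b(t) − ∂_a V(q(t)) for all t, the function I(t) = K₂_{ab}(t,q(t)) q̇^a q̇^b + K₁_a(t,q(t)) q̇^a + K₀(t,q(t))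 is constant. -/
/-- Partial derivative of a scalar field on ℝⁿ in the `a`-th coordinate direction. -/
noncomputable def pd {n : ℕ} (f : (Fin n → ℝ) → ℝ) (a : Fin n) (x : Fin n → ℝ) : ℝ :=
  fderiv ℝ f x (Pi.single a 1)

/-- Spatial partial derivative of a time-dependent scalar field. -/
noncomputable def pdx {n : ℕ} (f : ℝ × (Fin n → ℝ) → ℝ) (a : Fin n)
    (p : ℝ × (Fin n → ℝ)) : ℝ :=
  fderiv ℝ f p (0, Pi.single a 1)

/-- Time partial derivative of a time-dependent scalar field. -/
noncomputable def pdt {n : ℕ} (f : ℝ × (Fin n → ℝ) → ℝ) (p : ℝ × (Fin n → ℝ)) : ℝ :=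
  fderiv ℝ f p (1, 0)

open Finset in
lemma hasDerivAt_comp_curve {n : ℕ} (f : ℝ × (Fin n → ℝ) → ℝ) (hf : ContDiff ℝ (⊤ : ℕ∞) f)
    (q q' : ℝ → Fin n → ℝ) (hq : ∀ t, HasDerivAt q (q' t) t) (t : ℝ) :
    HasDerivAt (fun s => f (s, q s)) (pdt f (t, q t) + ∑ c, q' t c * pdx f c (t, q t)) t := by
  have hγ : HasDerivAt (fun s => ((s, q s) : ℝ × (Fin n → ℝ))) (1, q' t) t :=
    (hasDerivAt_id t).prodMk (hq t)
  have hfd : DifferentiableAt ℝ f (t, q t) := (hf.differentiable (by simp)).differentiableAt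
  have h := (hfd.hasFDerivAt).comp_hasDerivAt t hγ
  refine h.congr_deriv ?_
  have hv : ((1 : ℝ), q' t) = ((1:ℝ), (0 : Fin n → ℝ))
      + ∑ c, q' t c • (((0:ℝ), Pi.single c (1:ℝ)) : ℝ × (Fin n → ℝ)) := by
    rw [Prod.ext_iff]
    constructor
    · simp [Prod.fst_sum]
    · simp only [Prod.snd_add, Prod.snd_sum, Prod.smul_snd]
      rw [zero_add]
      nth_rewrite 1 [pi_eq_sum_univ (q' t)]
      refine Finset.sum_congr rfl fun c _ => ?_
      congr 1
      ext j
      simp [Pi.single_apply, eq_comm]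
  rw [hv, map_add, map_sum]
  simp only [map_smul, smul_eq_mul]
  rfl


lemma sum2_swap {n : ℕ} (f : Fin n → Fin n → ℝ) :
    ∑ a, ∑ b, f a b = ∑ a, ∑ b, f b a := Finset.sum_comm

lemma sum3_rotate {n : ℕ} (g : Fin n → Fin n → Fin n → ℝ) :
    ∑ a, ∑ b, ∑ c, g a b c = ∑ a, ∑ b, ∑ c, g c a b := by
  rw [Finset.sum_comm]
  exact Finset.sum_congr rfl fun b _ => Finset.sum_comm

lemma sum3_swap13 {n : ℕ} (g : Fin n → Fin n → Fin n → ℝ) :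
    ∑ a, ∑ b, ∑ c, g a b c = ∑ a, ∑ b, ∑ c, g c b a :=
  calc ∑ a, ∑ b, ∑ c, g a b c = ∑ b, ∑ a, ∑ c, g a b c := Finset.sum_comm
    _ = ∑ b, ∑ c, ∑ a, g a b c := Finset.sum_congr rfl fun _ _ => Finset.sum_comm
    _ = ∑ c, ∑ b, ∑ a, g a b c := Finset.sum_comm

lemma alg {n : ℕ}
    (v dV : Fin n → ℝ) (k1 P1 X0 : Fin n → ℝ)
    (k2 P2 M : Fin n → Fin n → ℝ) (X1 : Fin n → Fin n → ℝ)
    (X2 : Fin n → Fin n → Fin n → ℝ) (P0 : ℝ)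
    (Hsym : ∀ a b, k2 a b = k2 b a)
    (H1 : ∀ a b c, X2 a b c + X2 b c a + X2 c a b = 0)
    (H2 : ∀ a b, P2 a b + (1/2) * (X1 b a + X1 a b)
      + ∑ c, (k2 c b * M c a + k2 c a * M c b) = 0)
    (H3 : ∀ a, -2 * (∑ b, k2 a b * dV b) + P1 a + X0 a + ∑ b, k1 b * M b a = 0)
    (H4 : P0 - ∑ a, k1 a * dV a = 0) :
    (∑ a, ∑ b, (((P2 a b + ∑ c, v c * X2 a b c) * v a
        + k2 a b * ((∑ d, M a d * v d) - dV a)) * v b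
        + k2 a b * v a * ((∑ d, M b d * v d) - dV b)))
      + (∑ a, ((P1 a + ∑ c, v c * X1 a c) * v a
        + k1 a * ((∑ d, M a d * v d) - dV a)))
      + (P0 + ∑ c, v c * X0 c) = 0 := by
  have hH1 : ∑ a, ∑ b, ∑ c, (X2 a b c + X2 b c a + X2 c a b) * (v a * v b * v c) = 0 :=
    Finset.sum_eq_zero fun a _ => Finset.sum_eq_zero fun b _ => Finset.sum_eq_zero fun c _ => by
      rw [H1, zero_mul]
  have sum2_smul : ∀ (c : ℝ) (f : Fin n → Fin n → ℝ),
      c * ∑ a, ∑ b, f a b = ∑ a, ∑ b, c * f a b := by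
    intro c f; simp [Finset.mul_sum]
  have hH2 : (∑ a, ∑ b, P2 a b * (v a * v b))
      + ((1/2) * ∑ a, ∑ b, X1 b a * (v a * v b)
        + (1/2) * ∑ a, ∑ b, X1 a b * (v a * v b))
      + ((∑ a, ∑ b, ∑ c, k2 c b * M c a * (v a * v b))
        + ∑ a, ∑ b, ∑ c, k2 c a * M c b * (v a * v b)) = 0 := by
    rw [sum2_smul, sum2_smul]
    simp only [← Finset.sum_add_distrib]
    refine Finset.sum_eq_zero fun a _ => Finset.sum_eq_zero fun b _ => ?_
    have h0 : (P2 a b + (1/2) * (X1 b a + X1 a b)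
        + ∑ c, (k2 c b * M c a + k2 c a * M c b)) * (v a * v b) = 0 := by
      rw [H2, zero_mul]
    rw [← h0]
    simp only [add_mul, Finset.sum_mul, Finset.sum_add_distrib, mul_add]
    ring
  have hH3 : -2 * (∑ a, (∑ b, k2 a b * dV b) * v a) + (∑ a, P1 a * v a)
      + (∑ a, X0 a * v a) + ∑ a, (∑ b, k1 b * M b a) * v a = 0 := by
    rw [Finset.mul_sum]
    simp only [← Finset.sum_add_distrib]
    refine Finset.sum_eq_zero fun a _ => ?_
    have h0 : (-2 * (∑ b, k2 a b * dV b) + P1 a + X0 a + ∑ b, k1 b * M b a) * v a = 0 := by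
      rw [H3, zero_mul]
    rw [← h0]; ring
  have r6 : ∑ a, (∑ b, k2 a b * dV b) * v a = ∑ a, ∑ b, k2 a b * dV b * v a :=
    Finset.sum_congr rfl fun a _ => Finset.sum_mul _ _ _
  have r7 : ∑ a, (∑ b, k1 b * M b a) * v a = ∑ a, ∑ b, k1 b * M b a * v a :=
    Finset.sum_congr rfl fun a _ => Finset.sum_mul _ _ _
  -- rename equalities
  have r1 : ∑ a, ∑ b, X1 b a * (v a * v b) = ∑ a, ∑ b, X1 a b * (v a * v b) := by
    rw [sum2_swap (fun a b => X1 b a * (v a * v b))]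
    exact Finset.sum_congr rfl fun a _ => Finset.sum_congr rfl fun b _ => by ring
  have e1 : ∑ a, ∑ b, ∑ c, X2 b c a * (v a * v b * v c)
      = ∑ a, ∑ b, ∑ c, X2 a b c * (v a * v b * v c) := by
    calc ∑ a, ∑ b, ∑ c, X2 b c a * (v a * v b * v c)
        = ∑ a, ∑ b, ∑ c, X2 b c a * (v b * v c * v a) := Finset.sum_congr rfl fun a _ =>
            Finset.sum_congr rfl fun b _ => Finset.sum_congr rfl fun c _ => by ring
      _ = _ := sum3_rotate (fun a b c => X2 b c a * (v b * v c * v a))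
  have e2 : ∑ a, ∑ b, ∑ c, X2 c a b * (v a * v b * v c)
      = ∑ a, ∑ b, ∑ c, X2 a b c * (v a * v b * v c) := by
    calc ∑ a, ∑ b, ∑ c, X2 c a b * (v a * v b * v c)
        = ∑ a, ∑ b, ∑ c, X2 c a b * (v c * v a * v b) := Finset.sum_congr rfl fun a _ =>
            Finset.sum_congr rfl fun b _ => Finset.sum_congr rfl fun c _ => by ring
      _ = _ := (sum3_rotate (fun a b c => X2 a b c * (v a * v b * v c))).symm
  -- cubic term vanishes
  have hcubic : ∑ a, ∑ b, ∑ c, X2 a b c * (v a * v b * v c) = 0 := by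
    have : ∑ a, ∑ b, ∑ c, (X2 a b c + X2 b c a + X2 c a b) * (v a * v b * v c)
        = 3 * ∑ a, ∑ b, ∑ c, X2 a b c * (v a * v b * v c) := by
      simp only [add_mul, Finset.sum_add_distrib]
      rw [e1, e2]; ring
    rw [this] at hH1; linarith
  -- remaining renames
  have r2 : ∑ a, ∑ b, ∑ c, k2 a b * M a c * (v c * v b)
      = ∑ a, ∑ b, ∑ c, k2 c b * M c a * (v a * v b) :=
    sum3_swap13 (fun a b c => k2 a b * M a c * (v c * v b))
  have r3 : ∑ a, ∑ b, ∑ c, k2 a b * M b c * (v a * v c)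
      = ∑ a, ∑ b, ∑ c, k2 c a * M c b * (v a * v b) := by
    calc ∑ a, ∑ b, ∑ c, k2 a b * M b c * (v a * v c)
        = ∑ a, ∑ b, ∑ c, k2 a c * M c b * (v a * v b) :=
          Finset.sum_congr rfl fun a _ => Finset.sum_comm
      _ = ∑ a, ∑ b, ∑ c, k2 c a * M c b * (v a * v b) :=
          Finset.sum_congr rfl fun a _ => Finset.sum_congr rfl fun b _ =>
            Finset.sum_congr rfl fun c _ => by rw [Hsym a c]
  have r4 : ∑ a, ∑ b, k2 a b * dV a * v b = ∑ a, ∑ b, k2 a b * dV b * v a := by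
    rw [sum2_swap (fun a b => k2 a b * dV a * v b)]
    exact Finset.sum_congr rfl fun a _ => Finset.sum_congr rfl fun b _ => by
      rw [Hsym b a]
  have r5 : ∑ a, ∑ b, k1 a * M a b * v b = ∑ a, ∑ b, k1 b * M b a * v a :=
    sum2_swap (fun a b => k1 a * M a b * v b)
  -- expand everything and finish linearly
  simp only [add_mul, mul_add, sub_mul, mul_sub, Finset.sum_add_distrib,
    Finset.sum_sub_distrib, Finset.mul_sum, Finset.sum_mul]
  simp only [mul_comm, mul_left_comm, mul_assoc] at hH2 hH3 hcubic r1 r2 r3 r4 r5 r6 r7 H4 ⊢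
  linarith [hH2, hH3, hcubic, r1, r2, r3, r4, r5, r6, r7, H4]

theorem quadratic_first_integral_general {n : ℕ} (hn : 1 ≤ n)
    (A : (Fin n → ℝ) → Matrix (Fin n) (Fin n) ℝ) (V : (Fin n → ℝ) → ℝ)
    (hA : ∀ a b, ContDiff ℝ (⊤ : ℕ∞) fun x => A x a b) (hV : ContDiff ℝ (⊤ : ℕ∞) V)
    (K₂ : ℝ × (Fin n → ℝ) → Fin n → Fin n → ℝ)
    (K₁ : ℝ × (Fin n → ℝ) → Fin n → ℝ)
    (K₀ : ℝ × (Fin n → ℝ) → ℝ)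
    (hK₂ : ∀ a b, ContDiff ℝ (⊤ : ℕ∞) fun p => K₂ p a b)
    (hK₂sym : ∀ p a b, K₂ p a b = K₂ p b a)
    (hK₁ : ∀ a, ContDiff ℝ (⊤ : ℕ∞) fun p => K₁ p a)
    (hK₀ : ContDiff ℝ (⊤ : ℕ∞) K₀)
    (h1 : ∀ (p : ℝ × (Fin n → ℝ)) (a b c : Fin n),
      pdx (fun s => K₂ s a b) c p + pdx (fun s => K₂ s b c) a p
        + pdx (fun s => K₂ s c a) b p = 0)
    (h2 : ∀ (p : ℝ × (Fin n → ℝ)) (a b : Fin n),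
      pdt (fun s => K₂ s a b) p
        + (1/2) * (pdx (fun s => K₁ s b) a p + pdx (fun s => K₁ s a) b p)
        + ∑ c, (K₂ p c b * A p.2 c a + K₂ p c a * A p.2 c b) = 0)
    (h3 : ∀ (p : ℝ × (Fin n → ℝ)) (a : Fin n),
      -2 * (∑ b, K₂ p a b * pd V b p.2)
        + pdt (fun s => K₁ s a) p + pdx K₀ a p
        + ∑ b, K₁ p b * A p.2 b a = 0)
    (h4 : ∀ p : ℝ × (Fin n → ℝ), pdt K₀ p - ∑ a, K₁ p a * pd V a p.2 = 0)
    (q q' q'' : ℝ → Fin n → ℝ)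
    (hq : ∀ t, HasDerivAt q (q' t) t) (hq' : ∀ t, HasDerivAt q' (q'' t) t)
    (heq : ∀ t a, q'' t a = (∑ b, A (q t) a b * q' t b) - pd V a (q t)) :
    ∀ t₁ t₂ : ℝ,
      (∑ a, ∑ b, K₂ (t₁, q t₁) a b * q' t₁ a * q' t₁ b)
        + (∑ a, K₁ (t₁, q t₁) a * q' t₁ a) + K₀ (t₁, q t₁)
      = (∑ a, ∑ b, K₂ (t₂, q t₂) a b * q' t₂ a * q' t₂ b)
        + (∑ a, K₁ (t₂, q t₂) a * q' t₂ a) + K₀ (t₂, q t₂) := by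
  intro t₁ t₂
  have key : ∀ t : ℝ, HasDerivAt (fun s =>
      (∑ a, ∑ b, K₂ (s, q s) a b * q' s a * q' s b)
        + (∑ a, K₁ (s, q s) a * q' s a) + K₀ (s, q s)) 0 t := by
    intro t
    have hv : ∀ a, HasDerivAt (fun s => q' s a) (q'' t a) t :=
      fun a => hasDerivAt_pi.mp (hq' t) a
    have hKc : ∀ a b, HasDerivAt (fun s => K₂ (s, q s) a b)
        (pdt (fun s => K₂ s a b) (t, q t)
          + ∑ c, q' t c * pdx (fun s => K₂ s a b) c (t, q t)) t :=
      fun a b => hasDerivAt_comp_curve _ (hK₂ a b) q q' hq t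
    have hK1c : ∀ a, HasDerivAt (fun s => K₁ (s, q s) a)
        (pdt (fun s => K₁ s a) (t, q t)
          + ∑ c, q' t c * pdx (fun s => K₁ s a) c (t, q t)) t :=
      fun a => hasDerivAt_comp_curve _ (hK₁ a) q q' hq t
    have hK0c : HasDerivAt (fun s => K₀ (s, q s))
        (pdt K₀ (t, q t) + ∑ c, q' t c * pdx K₀ c (t, q t)) t :=
      hasDerivAt_comp_curve _ hK₀ q q' hq t
    have hsum2 : HasDerivAt (fun s => ∑ a, ∑ b, K₂ (s, q s) a b * q' s a * q' s b)
        (∑ a, ∑ b, (((pdt (fun s => K₂ s a b) (t, q t)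
            + ∑ c, q' t c * pdx (fun s => K₂ s a b) c (t, q t)) * q' t a
            + K₂ (t, q t) a b * q'' t a) * q' t b
            + K₂ (t, q t) a b * q' t a * q'' t b)) t :=
      HasDerivAt.fun_sum fun a _ => HasDerivAt.fun_sum fun b _ =>
        ((hKc a b).mul (hv a)).mul (hv b)
    have hsum1 : HasDerivAt (fun s => ∑ a, K₁ (s, q s) a * q' s a)
        (∑ a, ((pdt (fun s => K₁ s a) (t, q t)
            + ∑ c, q' t c * pdx (fun s => K₁ s a) c (t, q t)) * q' t a
            + K₁ (t, q t) a * q'' t a)) t :=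
      HasDerivAt.fun_sum fun a _ => (hK1c a).mul (hv a)
    have total := (hsum2.add hsum1).add hK0c
    have hE : (∑ a, ∑ b, (((pdt (fun s => K₂ s a b) (t, q t)
            + ∑ c, q' t c * pdx (fun s => K₂ s a b) c (t, q t)) * q' t a
            + K₂ (t, q t) a b * q'' t a) * q' t b
            + K₂ (t, q t) a b * q' t a * q'' t b))
        + (∑ a, ((pdt (fun s => K₁ s a) (t, q t)
            + ∑ c, q' t c * pdx (fun s => K₁ s a) c (t, q t)) * q' t a
            + K₁ (t, q t) a * q'' t a))
        + (pdt K₀ (t, q t) + ∑ c, q' t c * pdx K₀ c (t, q t)) = 0 := by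
      simp only [heq]
      exact alg (q' t) (fun a => pd V a (q t)) (fun a => K₁ (t, q t) a)
        (fun a => pdt (fun s => K₁ s a) (t, q t)) (fun c => pdx K₀ c (t, q t))
        (fun a b => K₂ (t, q t) a b) (fun a b => pdt (fun s => K₂ s a b) (t, q t))
        (fun a b => A (q t) a b) (fun a c => pdx (fun s => K₁ s a) c (t, q t))
        (fun a b c => pdx (fun s => K₂ s a b) c (t, q t)) (pdt K₀ (t, q t))
        (fun a b => hK₂sym (t, q t) a b)
        (fun a b c => h1 (t, q t) a b c)
        (fun a b => h2 (t, q t) a b)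
        (fun a => h3 (t, q t) a)
        (h4 (t, q t))
    rw [hE] at total
    exact total
  exact is_const_of_deriv_eq_zero
    (fun t => (key t).differentiableAt) (fun t => (key t).deriv) t₁ t₂
end

section
/- Let n ≥ 1 and let V : ℝⁿ → ℝ, G : ℝⁿ → ℝ be smooth, C : ℝⁿ → (Fin n → Fin n → ℝ) a smooth symmetric tensor field, and L : ℝⁿ → ℝⁿ a smooth vector field. Define T_{ab} = ½(∂_a L_b + ∂_b L_a). Assume: (i) C is a Killing tensor (∂_c C_{ab} + ∂_a C_{bc} + ∂_b C_{ca} = 0); (ii) T is a Killing tensor; (iii) ∂_a(L_b ∂_b V) = −2 T_{ab} ∂_b V for all a (summed over b); (iv) ∂_a G = 2 C_{ab} ∂_b V − L_a for all a. Then for every twice-differentiable curve q : ℝ → ℝⁿ with q̈^a(t) = −∂_a V(q(t)), the function I₁(t) = −(t²/2) T_{ab}(q(t)) q̇^a q̇^b + C_{ab}(q(t)) q̇^a q̇^b + t L_a(q(t)) q̇^a + (t²/2) L_a(q(t)) ∂_a V(q(t)) + G(q(t)) is constant. -/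
-- chain rule along curve
lemma chain_curve {n : ℕ} {f : (Fin n → ℝ) → ℝ} (hf : ContDiff ℝ (⊤ : ℕ∞) f)
    {q : ℝ → Fin n → ℝ} {v : Fin n → ℝ} {t : ℝ} (hq : HasDerivAt q v t) :
    HasDerivAt (fun s => f (q s)) (∑ a, v a * pd f a (q t)) t := by
  have h1 : HasDerivAt (fun s => f (q s)) (fderiv ℝ f (q t) v) t :=
    (hf.differentiable (by simp) (q t)).hasFDerivAt.comp_hasDerivAt t hq
  convert h1 using 1
  have hv : v = ∑ a, v a • (Pi.single a 1 : Fin n → ℝ) := by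
    funext j
    simp [Pi.single_apply]
  conv_rhs => rw [hv]
  rw [map_sum]
  simp [pd]

-- smoothness of pd
lemma contDiff_pd {n : ℕ} {f : (Fin n → ℝ) → ℝ} (hf : ContDiff ℝ (⊤ : ℕ∞) f) (a : Fin n) :
    ContDiff ℝ (⊤ : ℕ∞) fun x => pd f a x := by
  exact (hf.fderiv_right (by simp)).clm_apply contDiff_const

lemma cyc_sum {n : ℕ} (f : Fin n → Fin n → Fin n → ℝ) :
    ∑ a, ∑ b, ∑ c, f a b c = ∑ a, ∑ b, ∑ c, f b c a := by
  have h1 : ∑ a, ∑ b, ∑ c, f a b c = ∑ a, ∑ c, ∑ b, f a b c :=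
    Finset.sum_congr rfl fun a _ => Finset.sum_comm
  rw [h1, Finset.sum_comm]

lemma killing_contraction {n : ℕ} (P : Fin n → Fin n → Fin n → ℝ) (v : Fin n → ℝ)
    (hk : ∀ a b c, P a b c + P b c a + P c a b = 0) :
    ∑ a, ∑ b, ∑ c, P a b c * v a * v b * v c = 0 := by
  have e2 : ∑ a, ∑ b, ∑ c, P a b c * v c * v a * v b
      = ∑ a, ∑ b, ∑ c, P b c a * v a * v b * v c :=
    cyc_sum fun a b c => P a b c * v c * v a * v b
  have e3 : ∑ a, ∑ b, ∑ c, P c a b * v a * v b * v c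
      = ∑ a, ∑ b, ∑ c, P a b c * v b * v c * v a :=
    cyc_sum fun a b c => P c a b * v a * v b * v c
  have hr2 : ∑ a, ∑ b, ∑ c, P a b c * v c * v a * v b
      = ∑ a, ∑ b, ∑ c, P a b c * v a * v b * v c :=
    Finset.sum_congr rfl fun a _ => Finset.sum_congr rfl fun b _ =>
      Finset.sum_congr rfl fun c _ => by ring
  have hr3 : ∑ a, ∑ b, ∑ c, P a b c * v b * v c * v a
      = ∑ a, ∑ b, ∑ c, P a b c * v a * v b * v c :=
    Finset.sum_congr rfl fun a _ => Finset.sum_congr rfl fun b _ =>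
      Finset.sum_congr rfl fun c _ => by ring
  have key : ∑ a, ∑ b, ∑ c, (P a b c + P b c a + P c a b) * v a * v b * v c = 0 := by
    refine Finset.sum_eq_zero fun a _ => Finset.sum_eq_zero fun b _ =>
      Finset.sum_eq_zero fun c _ => ?_
    rw [hk a b c]; ring
  have expand : ∑ a, ∑ b, ∑ c, (P a b c + P b c a + P c a b) * v a * v b * v c
      = (∑ a, ∑ b, ∑ c, P a b c * v a * v b * v c)
        + (∑ a, ∑ b, ∑ c, P b c a * v a * v b * v c)
        + (∑ a, ∑ b, ∑ c, P c a b * v a * v b * v c) := by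
    simp only [← Finset.sum_add_distrib]
    refine Finset.sum_congr rfl fun a _ => Finset.sum_congr rfl fun b _ =>
      Finset.sum_congr rfl fun c _ => by ring
  rw [expand, ← e2, hr2, e3, hr3] at key
  linarith

/-- Derivative of a quadratic form `∑ M_{ab} v^a v^b` along the flow,
for a symmetric Killing tensor `M` with gradient `dM a b c = ∂_c M_{ab}`. -/
lemma quad_deriv_sum {n : ℕ} (M : Fin n → Fin n → ℝ) (dM : Fin n → Fin n → Fin n → ℝ)
    (v Va : Fin n → ℝ)
    (hMsym : ∀ a b, M a b = M b a)
    (hkill : ∀ a b c, dM a b c + dM b c a + dM c a b = 0) :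
    ∑ a, ∑ b, (((∑ c, v c * dM a b c) * v a + M a b * -(Va a)) * v b
        + M a b * v a * -(Va b))
      = -2 * ∑ a, ∑ b, M a b * v a * Va b := by
  have step1 : ∀ a b, (((∑ c, v c * dM a b c) * v a + M a b * -(Va a)) * v b
        + M a b * v a * -(Va b))
      = (∑ c, dM a b c * v a * v b * v c)
        + (-(M a b * Va a * v b) + -(M a b * v a * Va b)) := by
    intro a b
    have : (∑ c, v c * dM a b c) * (v a * v b) = ∑ c, dM a b c * v a * v b * v c := by
      rw [Finset.sum_mul]
      exact Finset.sum_congr rfl fun c _ => by ring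
    calc (((∑ c, v c * dM a b c) * v a + M a b * -(Va a)) * v b + M a b * v a * -(Va b))
        = (∑ c, v c * dM a b c) * (v a * v b)
          + (-(M a b * Va a * v b) + -(M a b * v a * Va b)) := by ring
      _ = _ := by rw [this]
  have split : ∑ a, ∑ b, (((∑ c, v c * dM a b c) * v a + M a b * -(Va a)) * v b
        + M a b * v a * -(Va b))
      = (∑ a, ∑ b, ∑ c, dM a b c * v a * v b * v c)
        + ∑ a, ∑ b, (-(M a b * Va a * v b) + -(M a b * v a * Va b)) := by
    rw [← Finset.sum_add_distrib]
    refine Finset.sum_congr rfl fun a _ => ?_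
    rw [← Finset.sum_add_distrib]
    exact Finset.sum_congr rfl fun b _ => step1 a b
  rw [split, killing_contraction dM v hkill, zero_add]
  have swap : ∑ a, ∑ b, M a b * Va a * v b = ∑ a, ∑ b, M a b * v a * Va b := by
    rw [Finset.sum_comm]
    exact Finset.sum_congr rfl fun a _ => Finset.sum_congr rfl fun b _ => by
      rw [hMsym b a]; ring
  rw [show ∑ a, ∑ b, (-(M a b * Va a * v b) + -(M a b * v a * Va b))
      = -(∑ a, ∑ b, M a b * Va a * v b) + -(∑ a, ∑ b, M a b * v a * Va b) from by
    simp only [Finset.sum_add_distrib, Finset.sum_neg_distrib]]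
  rw [swap]; ring

/-- Derivative of `∑ L_a v^a` along the flow. -/
lemma lin_deriv_sum {n : ℕ} (Lx : Fin n → ℝ) (M : Fin n → Fin n → ℝ)
    (dL : Fin n → Fin n → ℝ) (v Va : Fin n → ℝ)
    (hM : ∀ a b, M a b = (1/2) * (dL b a + dL a b)) :
    ∑ a, ((∑ c, v c * dL a c) * v a + Lx a * -(Va a))
      = (∑ a, ∑ b, M a b * v a * v b) - ∑ a, Lx a * Va a := by
  have split : ∑ a, ((∑ c, v c * dL a c) * v a + Lx a * -(Va a))
      = (∑ a, ∑ c, dL a c * v a * v c) + ∑ a, -(Lx a * Va a) := by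
    rw [← Finset.sum_add_distrib]
    refine Finset.sum_congr rfl fun a _ => ?_
    congr 1
    · rw [Finset.sum_mul]
      exact Finset.sum_congr rfl fun c _ => by ring
    · ring
  rw [split]
  have swap : ∑ a, ∑ c, dL a c * v a * v c = ∑ a, ∑ c, dL c a * v a * v c := by
    rw [Finset.sum_comm]
    exact Finset.sum_congr rfl fun a _ => Finset.sum_congr rfl fun c _ => by ring
  have hMM : ∑ a, ∑ b, M a b * v a * v b
      = ∑ a, ∑ b, dL a b * v a * v b := by
    have h2 : ∑ a, ∑ b, M a b * v a * v b
        = ∑ a, ∑ b, ((1/2) * (dL b a * v a * v b) + (1/2) * (dL a b * v a * v b)) :=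
      Finset.sum_congr rfl fun a _ => Finset.sum_congr rfl fun b _ => by rw [hM a b]; ring
    rw [h2]
    rw [show ∑ a, ∑ b, ((1/2) * (dL b a * v a * v b) + (1/2) * (dL a b * v a * v b))
        = (∑ a, ∑ b, (1/2) * (dL b a * v a * v b))
          + ∑ a, ∑ b, (1/2) * (dL a b * v a * v b) from by
      rw [← Finset.sum_add_distrib]
      exact Finset.sum_congr rfl fun a _ => by rw [← Finset.sum_add_distrib]]
    have : ∑ a, ∑ b, (1/2) * (dL b a * v a * v b)
        = ∑ a, ∑ b, (1/2) * (dL a b * v a * v b) := by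
      rw [Finset.sum_comm]
      exact Finset.sum_congr rfl fun a _ => Finset.sum_congr rfl fun b _ => by ring
    rw [this, ← Finset.sum_add_distrib]
    refine Finset.sum_congr rfl fun a _ => ?_
    rw [← Finset.sum_add_distrib]
    exact Finset.sum_congr rfl fun b _ => by ring
  rw [hMM, swap, Finset.sum_neg_distrib]
  ring

theorem firstIntegral_I1 {n : ℕ} (hn : 1 ≤ n)
    (V G : (Fin n → ℝ) → ℝ) (hV : ContDiff ℝ (⊤ : ℕ∞) V) (hG : ContDiff ℝ (⊤ : ℕ∞) G)
    (C : (Fin n → ℝ) → Fin n → Fin n → ℝ)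
    (hC : ∀ a b, ContDiff ℝ (⊤ : ℕ∞) fun x => C x a b)
    (hCsym : ∀ x a b, C x a b = C x b a)
    (L : (Fin n → ℝ) → Fin n → ℝ)
    (hL : ∀ a, ContDiff ℝ (⊤ : ℕ∞) fun x => L x a)
    (T : (Fin n → ℝ) → Fin n → Fin n → ℝ)
    (hT : ∀ x a b, T x a b
      = (1/2) * (pd (fun y => L y b) a x + pd (fun y => L y a) b x))
    (hCkill : ∀ x a b c, pd (fun y => C y a b) c x + pd (fun y => C y b c) a x
        + pd (fun y => C y c a) b x = 0)
    (hTkill : ∀ x a b c, pd (fun y => T y a b) c x + pd (fun y => T y b c) a x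
        + pd (fun y => T y c a) b x = 0)
    (hLV : ∀ x a, pd (fun y => ∑ b, L y b * pd V b y) a x
        = -2 * ∑ b, T x a b * pd V b x)
    (hGa : ∀ x a, pd G a x = 2 * (∑ b, C x a b * pd V b x) - L x a)
    (q q' q'' : ℝ → Fin n → ℝ)
    (hq : ∀ t, HasDerivAt q (q' t) t) (hq' : ∀ t, HasDerivAt q' (q'' t) t)
    (heq : ∀ t a, q'' t a = - pd V a (q t)) :
    ∀ t₁ t₂ : ℝ,
      -(t₁^2/2) * (∑ a, ∑ b, T (q t₁) a b * q' t₁ a * q' t₁ b)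
        + (∑ a, ∑ b, C (q t₁) a b * q' t₁ a * q' t₁ b)
        + t₁ * (∑ a, L (q t₁) a * q' t₁ a)
        + (t₁^2/2) * (∑ a, L (q t₁) a * pd V a (q t₁))
        + G (q t₁)
      = -(t₂^2/2) * (∑ a, ∑ b, T (q t₂) a b * q' t₂ a * q' t₂ b)
        + (∑ a, ∑ b, C (q t₂) a b * q' t₂ a * q' t₂ b)
        + t₂ * (∑ a, L (q t₂) a * q' t₂ a)
        + (t₂^2/2) * (∑ a, L (q t₂) a * pd V a (q t₂))
        + G (q t₂) := by
  -- smoothness of T components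
  have hTsm : ∀ a b, ContDiff ℝ (⊤ : ℕ∞) fun x => T x a b := by
    intro a b
    have h : (fun x => T x a b)
        = fun x => (1/2) * (pd (fun y => L y b) a x + pd (fun y => L y a) b x) :=
      funext fun x => hT x a b
    rw [h]
    exact contDiff_const.mul ((contDiff_pd (hL b) a).add (contDiff_pd (hL a) b))
  have hWsm : ContDiff ℝ (⊤ : ℕ∞) (fun y => ∑ b, L y b * pd V b y) :=
    ContDiff.sum fun b _ => (hL b).mul (contDiff_pd hV b)
  have key : ∀ t : ℝ, HasDerivAt (fun s : ℝ =>
      -(s^2/2) * (∑ a, ∑ b, T (q s) a b * q' s a * q' s b)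
        + (∑ a, ∑ b, C (q s) a b * q' s a * q' s b)
        + s * (∑ a, L (q s) a * q' s a)
        + (s^2/2) * (∑ a, L (q s) a * pd V a (q s))
        + G (q s)) 0 t := by
    intro t
    have hva : ∀ a, HasDerivAt (fun s => q' s a) (q'' t a) t := fun a => by
      exact hasDerivAt_pi.1 (hq' t) a
    have hTsym : ∀ a b, T (q t) a b = T (q t) b a := fun a b => by
      rw [hT (q t) a b, hT (q t) b a]; ring
    have hTd : ∀ a b, HasDerivAt (fun s => T (q s) a b)
        (∑ c, q' t c * pd (fun y => T y a b) c (q t)) t := fun a b =>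
      chain_curve (hTsm a b) (hq t)
    have hCd : ∀ a b, HasDerivAt (fun s => C (q s) a b)
        (∑ c, q' t c * pd (fun y => C y a b) c (q t)) t := fun a b =>
      chain_curve (hC a b) (hq t)
    have hLd : ∀ a, HasDerivAt (fun s => L (q s) a)
        (∑ c, q' t c * pd (fun y => L y a) c (q t)) t := fun a =>
      chain_curve (hL a) (hq t)
    -- the four nonconstant building blocks with simplified derivatives
    have hTT : HasDerivAt (fun s => ∑ a, ∑ b, T (q s) a b * q' s a * q' s b)
        (-2 * ∑ a, ∑ b, T (q t) a b * q' t a * pd V b (q t)) t := by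
      have h := HasDerivAt.fun_sum (fun a (_ : a ∈ Finset.univ) =>
        HasDerivAt.fun_sum (fun b (_ : b ∈ Finset.univ) => ((hTd a b).mul (hva a)).mul (hva b)))
      refine h.congr_deriv ?_
      simp only [heq]
      exact quad_deriv_sum (fun a b => T (q t) a b)
        (fun a b c => pd (fun y => T y a b) c (q t)) (q' t) (fun a => pd V a (q t))
        hTsym (fun a b c => hTkill (q t) a b c)
    have hCC : HasDerivAt (fun s => ∑ a, ∑ b, C (q s) a b * q' s a * q' s b)
        (-2 * ∑ a, ∑ b, C (q t) a b * q' t a * pd V b (q t)) t := by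
      have h := HasDerivAt.fun_sum (fun a (_ : a ∈ Finset.univ) =>
        HasDerivAt.fun_sum (fun b (_ : b ∈ Finset.univ) => ((hCd a b).mul (hva a)).mul (hva b)))
      refine h.congr_deriv ?_
      simp only [heq]
      exact quad_deriv_sum (fun a b => C (q t) a b)
        (fun a b c => pd (fun y => C y a b) c (q t)) (q' t) (fun a => pd V a (q t))
        (fun a b => hCsym (q t) a b) (fun a b c => hCkill (q t) a b c)
    have hSL : HasDerivAt (fun s => ∑ a, L (q s) a * q' s a)
        ((∑ a, ∑ b, T (q t) a b * q' t a * q' t b)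
          - ∑ a, L (q t) a * pd V a (q t)) t := by
      have h := HasDerivAt.fun_sum (fun a (_ : a ∈ Finset.univ) => (hLd a).mul (hva a))
      refine h.congr_deriv ?_
      simp only [heq]
      exact lin_deriv_sum (fun a => L (q t) a) (fun a b => T (q t) a b)
        (fun a c => pd (fun y => L y a) c (q t)) (q' t) (fun a => pd V a (q t))
        (fun a b => hT (q t) a b)
    have hWc : HasDerivAt (fun s => ∑ a, L (q s) a * pd V a (q s))
        (-2 * ∑ a, ∑ b, T (q t) a b * q' t a * pd V b (q t)) t := by
      have h := chain_curve hWsm (hq t)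
      simp only [hLV] at h
      convert h using 1
      symm
      simp only [Finset.mul_sum]
      exact Finset.sum_congr rfl fun a _ => Finset.sum_congr rfl fun b _ => by ring
    have hGc : HasDerivAt (fun s => G (q s))
        (2 * (∑ a, ∑ b, C (q t) a b * q' t a * pd V b (q t))
          - ∑ a, L (q t) a * q' t a) t := by
      have h := chain_curve hG (hq t)
      simp only [hGa] at h
      convert h using 1
      symm
      simp only [mul_sub, Finset.mul_sum, Finset.sum_sub_distrib]
      congr 1
      · exact Finset.sum_congr rfl fun a _ => Finset.sum_congr rfl fun b _ => by ring
      · exact Finset.sum_congr rfl fun a _ => by ring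
    have hpow : HasDerivAt (fun s : ℝ => s^2) (2*t) t := by
      simpa using hasDerivAt_pow 2 t
    have hfull := (((((hpow.div_const 2).neg.mul hTT).add hCC).add
      ((hasDerivAt_id t).mul hSL)).add ((hpow.div_const 2).mul hWc)).add hGc
    refine hfull.congr_deriv ?_
    simp only [Pi.neg_apply, id_eq]
    ring
  intro t₁ t₂
  exact is_const_of_deriv_eq_zero (fun s => (key s).differentiableAt)
    (fun s => (key s).deriv) t₁ t₂
end

section
/- Let n ≥ 1, let λ ≠ 0 be a real number, let V : ℝⁿ → ℝ be smooth and L : ℝⁿ → ℝⁿ a smooth vector field. Define T_{ab} = ½(∂_a L_b + ∂_b L_a). Assume: (i) T is a Killing tensor; (ii) ∂_a(L_b ∂_b V) = −2 T_{ab} ∂_b V − λ² L_a for all a (sum over b). Then for every twice-differentiable curve q : ℝ → ℝⁿ with q̈^a(t) = −∂_a V(q(t)), the function I₃(t) = e^{λt} ( −T_{ab}(q(t)) q̇^a q̇^b + λ L_a(q(t)) q̇^a + L_a(q(t)) ∂_a V(q(t)) ) is constant. -/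
lemma pd_contDiff {n : ℕ} {f : (Fin n → ℝ) → ℝ} (hf : ContDiff ℝ (⊤ : ℕ∞) f) (a : Fin n) :
    ContDiff ℝ (⊤ : ℕ∞) (pd f a) := by
  unfold pd
  exact (hf.fderiv_right (by simp)).clm_apply contDiff_const

lemma hasDerivAt_comp_q {n : ℕ} {f : (Fin n → ℝ) → ℝ} (hf : ContDiff ℝ (⊤ : ℕ∞) f)
    {q : ℝ → Fin n → ℝ} {v : Fin n → ℝ} {t : ℝ} (hq : HasDerivAt q v t) :
    HasDerivAt (fun s => f (q s)) (∑ c, pd f c (q t) * v c) t := by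
  have h1 : HasDerivAt (fun s => f (q s)) (fderiv ℝ f (q t) v) t :=
    ((hf.differentiable (by simp) (q t)).hasFDerivAt).comp_hasDerivAt t hq
  have hv : v = ∑ c, v c • (Pi.single c 1 : Fin n → ℝ) := by
    funext j
    simp [Finset.sum_apply, Pi.single_apply]
  have h2 : fderiv ℝ f (q t) v = ∑ c, pd f c (q t) * v c := by
    conv_lhs => rw [hv]
    rw [map_sum]
    exact Finset.sum_congr rfl fun c _ => by rw [map_smul]; simp [pd, mul_comm]
  rw [← h2]
  exact h1

lemma hasDerivAt_apply_comp {n : ℕ} {q : ℝ → Fin n → ℝ} {v : Fin n → ℝ} {t : ℝ}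
    (hq : HasDerivAt q v t) (a : Fin n) :
    HasDerivAt (fun s => q s a) (v a) t :=
  hasDerivAt_pi.mp hq a

lemma move_inner_out {ι : Type*} [Fintype ι] (f : ι → ι → ι → ℝ) :
    (∑ a, ∑ b, ∑ c, f a b c) = ∑ c, ∑ a, ∑ b, f a b c := by
  have h1 : (∑ a, ∑ b, ∑ c, f a b c) = ∑ a, ∑ c, ∑ b, f a b c :=
    Finset.sum_congr rfl fun a _ => Finset.sum_comm
  rw [h1]
  exact Finset.sum_comm

lemma killing_contract {ι : Type*} [Fintype ι] (P : ι → ι → ι → ℝ) (u : ι → ℝ)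
    (hk : ∀ a b c, P c a b + P a b c + P b c a = 0) :
    (∑ a, ∑ b, ∑ c, P c a b * u c * u a * u b) = 0 := by
  set Q := ∑ a, ∑ b, ∑ c, P a b c * u a * u b * u c with hQ
  have e1 : (∑ a, ∑ b, ∑ c, P c a b * u c * u a * u b) = Q := by
    rw [move_inner_out (fun a b c => P c a b * u c * u a * u b)]
  have e2 : (∑ a, ∑ b, ∑ c, P a b c * u c * u a * u b) = Q :=
    Finset.sum_congr rfl fun a _ => Finset.sum_congr rfl fun b _ =>
      Finset.sum_congr rfl fun c _ => by ring
  have e3 : (∑ a, ∑ b, ∑ c, P b c a * u c * u a * u b) = Q := by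
    rw [move_inner_out (fun a b c => P b c a * u c * u a * u b),
        move_inner_out (fun a b c => P c a b * u a * u b * u c)]
    exact Finset.sum_congr rfl fun a _ => Finset.sum_congr rfl fun b _ =>
      Finset.sum_congr rfl fun c _ => by ring
  have h3 : (∑ a, ∑ b, ∑ c, (P c a b * u c * u a * u b + P a b c * u c * u a * u b
      + P b c a * u c * u a * u b)) = 0 := by
    refine Finset.sum_eq_zero fun a _ => Finset.sum_eq_zero fun b _ =>
      Finset.sum_eq_zero fun c _ => ?_
    have h := hk a b c
    linear_combination (u c * u a * u b) * h
  simp only [Finset.sum_add_distrib] at h3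
  rw [e1, e2, e3] at h3
  rw [e1]
  linarith

theorem firstIntegral_I3 {n : ℕ} (hn : 1 ≤ n) (lam : ℝ) (hlam : lam ≠ 0)
    (V : (Fin n → ℝ) → ℝ) (hV : ContDiff ℝ (⊤ : ℕ∞) V)
    (L : (Fin n → ℝ) → Fin n → ℝ)
    (hL : ∀ a, ContDiff ℝ (⊤ : ℕ∞) fun x => L x a)
    (T : (Fin n → ℝ) → Fin n → Fin n → ℝ)
    (hT : ∀ x a b, T x a b
      = (1/2) * (pd (fun y => L y b) a x + pd (fun y => L y a) b x))
    (hTkill : ∀ x a b c, pd (fun y => T y a b) c x + pd (fun y => T y b c) a x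
        + pd (fun y => T y c a) b x = 0)
    (hLV : ∀ x a, pd (fun y => ∑ b, L y b * pd V b y) a x
        = -2 * (∑ b, T x a b * pd V b x) - lam^2 * L x a)
    (q q' q'' : ℝ → Fin n → ℝ)
    (hq : ∀ t, HasDerivAt q (q' t) t) (hq' : ∀ t, HasDerivAt q' (q'' t) t)
    (heq : ∀ t a, q'' t a = - pd V a (q t)) :
    ∀ t₁ t₂ : ℝ,
      Real.exp (lam * t₁) *
        (-(∑ a, ∑ b, T (q t₁) a b * q' t₁ a * q' t₁ b)
          + lam * (∑ a, L (q t₁) a * q' t₁ a)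
          + (∑ a, L (q t₁) a * pd V a (q t₁)))
      = Real.exp (lam * t₂) *
        (-(∑ a, ∑ b, T (q t₂) a b * q' t₂ a * q' t₂ b)
          + lam * (∑ a, L (q t₂) a * q' t₂ a)
          + (∑ a, L (q t₂) a * pd V a (q t₂))) := by
  intro t₁ t₂
  have hTsmooth : ∀ a b, ContDiff ℝ (⊤ : ℕ∞) (fun y => T y a b) := by
    intro a b
    have : (fun y => T y a b)
        = fun y => (1/2) * (pd (fun z => L z b) a y + pd (fun z => L z a) b y) :=
      funext fun y => hT y a b
    rw [this]
    exact contDiff_const.mul ((pd_contDiff (hL b) a).add (pd_contDiff (hL a) b))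
  have hgsmooth : ContDiff ℝ (⊤ : ℕ∞) (fun y => ∑ b, L y b * pd V b y) :=
    ContDiff.sum fun b _ => (hL b).mul (pd_contDiff hV b)
  have hsym : ∀ x a b, T x a b = T x b a := by
    intro x a b; rw [hT, hT]; ring
  have key : ∀ t, HasDerivAt (fun s => Real.exp (lam * s) *
      (-(∑ a, ∑ b, T (q s) a b * q' s a * q' s b)
        + lam * (∑ a, L (q s) a * q' s a)
        + (∑ a, L (q s) a * pd V a (q s)))) 0 t := by
    intro t
    have hq'a : ∀ a, HasDerivAt (fun s => q' s a) (q'' t a) t :=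
      fun a => hasDerivAt_apply_comp (hq' t) a
    have hTab : ∀ a b, HasDerivAt (fun s => T (q s) a b)
        (∑ c, pd (fun y => T y a b) c (q t) * q' t c) t :=
      fun a b => hasDerivAt_comp_q (hTsmooth a b) (hq t)
    have hLa : ∀ a, HasDerivAt (fun s => L (q s) a)
        (∑ c, pd (fun y => L y a) c (q t) * q' t c) t :=
      fun a => hasDerivAt_comp_q (hL a) (hq t)
    have hA : HasDerivAt (fun s => ∑ a, ∑ b, T (q s) a b * q' s a * q' s b)
        (∑ a, ∑ b, (((∑ c, pd (fun y => T y a b) c (q t) * q' t c) * q' t a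
            + T (q t) a b * q'' t a) * q' t b + T (q t) a b * q' t a * q'' t b)) t :=
      HasDerivAt.fun_sum fun a _ => HasDerivAt.fun_sum fun b _ =>
        (((hTab a b).mul (hq'a a)).mul (hq'a b))
    have hB : HasDerivAt (fun s => ∑ a, L (q s) a * q' s a)
        (∑ a, ((∑ c, pd (fun y => L y a) c (q t) * q' t c) * q' t a
            + L (q t) a * q'' t a)) t :=
      HasDerivAt.fun_sum fun a _ => (hLa a).mul (hq'a a)
    have hC : HasDerivAt (fun s => ∑ a, L (q s) a * pd V a (q s))
        (∑ c, pd (fun y => ∑ b, L y b * pd V b y) c (q t) * q' t c) t :=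
      hasDerivAt_comp_q hgsmooth (hq t)
    have hS : HasDerivAt (fun s => -(∑ a, ∑ b, T (q s) a b * q' s a * q' s b)
        + lam * (∑ a, L (q s) a * q' s a) + (∑ a, L (q s) a * pd V a (q s)))
        (-(∑ a, ∑ b, (((∑ c, pd (fun y => T y a b) c (q t) * q' t c) * q' t a
            + T (q t) a b * q'' t a) * q' t b + T (q t) a b * q' t a * q'' t b))
          + lam * (∑ a, ((∑ c, pd (fun y => L y a) c (q t) * q' t c) * q' t a
            + L (q t) a * q'' t a))
          + (∑ c, pd (fun y => ∑ b, L y b * pd V b y) c (q t) * q' t c)) t :=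
      (hA.neg.add (hB.const_mul lam)).add hC
    have hexp : HasDerivAt (fun s => Real.exp (lam * s)) (Real.exp (lam * t) * lam) t := by
      have h := ((hasDerivAt_id t).const_mul lam).exp
      simpa using h
    -- the algebraic identity: the derivative of the bracket equals -lam times the bracket
    have hK : (∑ a, ∑ b, ∑ c, pd (fun y => T y a b) c (q t) * q' t c * q' t a * q' t b) = 0 :=
      killing_contract (fun c a b => pd (fun y => T y a b) c (q t)) (q' t)
        (fun a b c => hTkill (q t) a b c)
    have s1 : (∑ a, ∑ b, (((∑ c, pd (fun y => T y a b) c (q t) * q' t c) * q' t a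
          + T (q t) a b * q'' t a) * q' t b + T (q t) a b * q' t a * q'' t b))
        = (∑ a, ∑ b, ∑ c, pd (fun y => T y a b) c (q t) * q' t c * q' t a * q' t b)
          + ((∑ a, ∑ b, T (q t) a b * q'' t a * q' t b)
            + (∑ a, ∑ b, T (q t) a b * q' t a * q'' t b)) := by
      have h1 : ∀ a b, (((∑ c, pd (fun y => T y a b) c (q t) * q' t c) * q' t a
            + T (q t) a b * q'' t a) * q' t b + T (q t) a b * q' t a * q'' t b)
          = (∑ c, pd (fun y => T y a b) c (q t) * q' t c * q' t a * q' t b)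
            + (T (q t) a b * q'' t a * q' t b + T (q t) a b * q' t a * q'' t b) := by
        intro a b
        rw [add_mul, Finset.sum_mul, Finset.sum_mul]
        ring
      rw [Finset.sum_congr rfl fun a _ => Finset.sum_congr rfl fun b _ => h1 a b]
      simp only [Finset.sum_add_distrib]
    have s2 : (∑ a, ((∑ c, pd (fun y => L y a) c (q t) * q' t c) * q' t a
          + L (q t) a * q'' t a))
        = (∑ a, ∑ c, pd (fun y => L y a) c (q t) * q' t c * q' t a)
          + (∑ a, L (q t) a * q'' t a) := by
      have h1 : ∀ a, ((∑ c, pd (fun y => L y a) c (q t) * q' t c) * q' t a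
            + L (q t) a * q'' t a)
          = (∑ c, pd (fun y => L y a) c (q t) * q' t c * q' t a)
            + L (q t) a * q'' t a := by
        intro a
        rw [Finset.sum_mul]
      rw [Finset.sum_congr rfl fun a _ => h1 a]
      simp only [Finset.sum_add_distrib]
    have s3 : (∑ c, pd (fun y => ∑ b, L y b * pd V b y) c (q t) * q' t c)
        = -2 * (∑ a, ∑ b, T (q t) a b * pd V b (q t) * q' t a)
          - lam ^ 2 * (∑ a, L (q t) a * q' t a) := by
      have h1 : ∀ c, pd (fun y => ∑ b, L y b * pd V b y) c (q t) * q' t c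
          = (-2) * (∑ b, T (q t) c b * pd V b (q t) * q' t c)
            - lam ^ 2 * (L (q t) c * q' t c) := by
        intro c
        rw [hLV (q t) c, sub_mul, mul_assoc, Finset.sum_mul, mul_assoc]
      rw [Finset.sum_congr rfl fun c _ => h1 c]
      rw [Finset.sum_sub_distrib, ← Finset.mul_sum, ← Finset.mul_sum]
    have m3 : (∑ a, ∑ b, T (q t) a b * q' t a * q'' t b)
        = ∑ a, ∑ b, T (q t) a b * q'' t a * q' t b := by
      rw [Finset.sum_comm]
      exact Finset.sum_congr rfl fun i _ => Finset.sum_congr rfl fun j _ => by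
        rw [hsym (q t) j i]; try ring
    have m2 : (∑ a, ∑ b, T (q t) a b * q'' t a * q' t b)
        = -(∑ a, ∑ b, T (q t) a b * pd V a (q t) * q' t b) := by
      simp only [heq, mul_neg, neg_mul, Finset.sum_neg_distrib]
    have m6 : (∑ a, ∑ b, T (q t) a b * pd V b (q t) * q' t a)
        = ∑ a, ∑ b, T (q t) a b * pd V a (q t) * q' t b := by
      rw [Finset.sum_comm]
      exact Finset.sum_congr rfl fun i _ => Finset.sum_congr rfl fun j _ => by
        rw [hsym (q t) j i]; try ring
    have m4 : (∑ a, ∑ c, pd (fun y => L y a) c (q t) * q' t c * q' t a)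
        = ∑ a, ∑ b, T (q t) a b * q' t a * q' t b := by
      have hR : (∑ a, ∑ b, T (q t) a b * q' t a * q' t b)
          = ∑ a, ∑ b, ((1/2) * (pd (fun y => L y b) a (q t) * q' t a * q' t b)
            + (1/2) * (pd (fun y => L y a) b (q t) * q' t a * q' t b)) :=
        Finset.sum_congr rfl fun a _ => Finset.sum_congr rfl fun b _ => by
          rw [hT (q t) a b]; ring
      rw [hR]
      simp only [Finset.sum_add_distrib, ← Finset.mul_sum]
      have hX : (∑ a, ∑ b, pd (fun y => L y b) a (q t) * q' t a * q' t b)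
          = ∑ a, ∑ c, pd (fun y => L y a) c (q t) * q' t c * q' t a := by
        rw [Finset.sum_comm]
      have hY : (∑ a, ∑ b, pd (fun y => L y a) b (q t) * q' t a * q' t b)
          = ∑ a, ∑ c, pd (fun y => L y a) c (q t) * q' t c * q' t a :=
        Finset.sum_congr rfl fun a _ => Finset.sum_congr rfl fun b _ => by ring
      rw [hX, hY]
      ring
    have m5 : (∑ a, L (q t) a * q'' t a) = -(∑ a, L (q t) a * pd V a (q t)) := by
      simp only [heq, mul_neg, Finset.sum_neg_distrib]
    have halg : (-(∑ a, ∑ b, (((∑ c, pd (fun y => T y a b) c (q t) * q' t c) * q' t a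
            + T (q t) a b * q'' t a) * q' t b + T (q t) a b * q' t a * q'' t b))
          + lam * (∑ a, ((∑ c, pd (fun y => L y a) c (q t) * q' t c) * q' t a
            + L (q t) a * q'' t a))
          + (∑ c, pd (fun y => ∑ b, L y b * pd V b y) c (q t) * q' t c))
        = -lam * (-(∑ a, ∑ b, T (q t) a b * q' t a * q' t b)
            + lam * (∑ a, L (q t) a * q' t a)
            + (∑ a, L (q t) a * pd V a (q t))) := by
      rw [s1, s2, s3, hK, m3, m2, m6, m4, m5]
      ring
    have hF := hexp.mul hS
    rw [halg] at hF
    have hz : Real.exp (lam * t) * lam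
          * (-(∑ a, ∑ b, T (q t) a b * q' t a * q' t b)
            + lam * (∑ a, L (q t) a * q' t a)
            + (∑ a, L (q t) a * pd V a (q t)))
        + Real.exp (lam * t)
          * (-lam * (-(∑ a, ∑ b, T (q t) a b * q' t a * q' t b)
            + lam * (∑ a, L (q t) a * q' t a)
            + (∑ a, L (q t) a * pd V a (q t)))) = 0 := by ring
    rw [hz] at hF
    exact hF
  exact is_const_of_deriv_eq_zero
    (fun s => (key s).differentiableAt) (fun s => (key s).deriv) t₁ t₂
end

section
/- Let n ≥ 1, let V : ℝⁿ → ℝ be smooth, let L, B : ℝⁿ → ℝⁿ be Killing vector fields (∂_a L_b + ∂_b L_a = 0 and ∂_a B_b + ∂_b B_a = 0), let s ∈ ℝ, and assume L_a(q) ∂_a V(q) = s for all q and ∂_a(B_b ∂_b V) = −2 L_a for all a and q (sums over repeated indices). Then for every twice-differentiable curve q : ℝ → ℝⁿ with q̈^a(t) = −∂_a V(q(t)), the function I(t) = (t² L_a(q(t)) + B_a(q(t))) q̇^a + (s/3) t³ + t B_a(q(t)) ∂_a V(q(t)) is constant. -/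
lemma clm_apply_sum {n : ℕ} (f : (Fin n → ℝ) →L[ℝ] ℝ) (v : Fin n → ℝ) :
    f v = ∑ i, v i * f (Pi.single i 1) := by
  have hv : v = ∑ i, v i • (Pi.single i 1 : Fin n → ℝ) := by
    funext j
    simp [Finset.sum_apply, Pi.single_apply]
  nth_rewrite 1 [hv]
  rw [map_sum]
  simp [smul_eq_mul]

lemma hasDerivAt_comp_pd {n : ℕ} {f : (Fin n → ℝ) → ℝ} (hf : ContDiff ℝ (⊤ : ℕ∞) f)
    {q : ℝ → Fin n → ℝ} {v : Fin n → ℝ} {t : ℝ} (hq : HasDerivAt q v t) :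
    HasDerivAt (fun u => f (q u)) (∑ b, pd f b (q t) * v b) t := by
  have h := ((hf.differentiable (by simp) (q t)).hasFDerivAt).comp_hasDerivAt t hq
  refine h.congr_deriv ?_
  rw [clm_apply_sum]
  simp [pd, mul_comm]

lemma killing_sum {n : ℕ} (M : Fin n → Fin n → ℝ) (hM : ∀ a b, M a b + M b a = 0)
    (v : Fin n → ℝ) : ∑ a, ∑ b, M a b * v a * v b = 0 := by
  have h : (∑ a, ∑ b, M a b * v a * v b) + (∑ a, ∑ b, M a b * v a * v b) = 0 := by
    nth_rewrite 2 [Finset.sum_comm]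
    rw [← Finset.sum_add_distrib]
    have : ∀ a ∈ Finset.univ, ((∑ b, M a b * v a * v b) + ∑ b, M b a * v b * v a) = 0 := by
      intro a _
      rw [← Finset.sum_add_distrib]
      apply Finset.sum_eq_zero
      intro b _
      have h0 : M b a = - M a b := by linarith [hM a b]
      rw [h0]; ring
    rw [Finset.sum_congr rfl this]
    simp
  linarith

lemma killing_contract_s4 {n : ℕ} (F : (Fin n → ℝ) → Fin n → ℝ) (x v : Fin n → ℝ)
    (hK : ∀ a b, pd (fun y => F y b) a x + pd (fun y => F y a) b x = 0) :
    ∑ a, (∑ b, pd (fun y => F y a) b x * v b) * v a = 0 := by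
  have h1 : ∀ a : Fin n, (∑ b, pd (fun y => F y a) b x * v b) * v a
      = ∑ b, pd (fun y => F y a) b x * v a * v b := by
    intro a; rw [Finset.sum_mul]; apply Finset.sum_congr rfl; intros; ring
  simp_rw [h1]
  exact killing_sum _ (fun a b => by have := hK b a; linarith) v

theorem linearFirstIntegral_I2 {n : ℕ} (hn : 1 ≤ n)
    (V : (Fin n → ℝ) → ℝ) (hV : ContDiff ℝ (⊤ : ℕ∞) V)
    (L B : (Fin n → ℝ) → Fin n → ℝ)
    (hL : ∀ a, ContDiff ℝ (⊤ : ℕ∞) fun x => L x a)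
    (hB : ∀ a, ContDiff ℝ (⊤ : ℕ∞) fun x => B x a)
    (hLKV : ∀ x a b, pd (fun y => L y b) a x + pd (fun y => L y a) b x = 0)
    (hBKV : ∀ x a b, pd (fun y => B y b) a x + pd (fun y => B y a) b x = 0)
    (s : ℝ)
    (hLV : ∀ x, ∑ a, L x a * pd V a x = s)
    (hBV : ∀ x a, pd (fun y => ∑ b, B y b * pd V b y) a x = -2 * L x a)
    (q q' q'' : ℝ → Fin n → ℝ)
    (hq : ∀ t, HasDerivAt q (q' t) t) (hq' : ∀ t, HasDerivAt q' (q'' t) t)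
    (heq : ∀ t a, q'' t a = - pd V a (q t)) :
    ∀ t₁ t₂ : ℝ,
      (∑ a, (t₁^2 * L (q t₁) a + B (q t₁) a) * q' t₁ a)
        + (s/3) * t₁^3 + t₁ * (∑ a, B (q t₁) a * pd V a (q t₁))
      = (∑ a, (t₂^2 * L (q t₂) a + B (q t₂) a) * q' t₂ a)
        + (s/3) * t₂^3 + t₂ * (∑ a, B (q t₂) a * pd V a (q t₂)) := by
  intro t₁ t₂
  set W : (Fin n → ℝ) → ℝ := fun y => ∑ b, B y b * pd V b y with hWdef
  have hpdV : ∀ b : Fin n, ContDiff ℝ (⊤ : ℕ∞) fun y => pd V b y := by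
    intro b
    exact (hV.fderiv_right (by simp)).clm_apply contDiff_const
  have hWc : ContDiff ℝ (⊤ : ℕ∞) W := by
    apply ContDiff.sum
    intro b _
    exact (hB b).mul (hpdV b)
  set I : ℝ → ℝ := fun t =>
    (∑ a, (t^2 * L (q t) a + B (q t) a) * q' t a) + (s/3) * t^3 + t * W (q t) with hIdef
  have hI : ∀ t, HasDerivAt I 0 t := by
    intro t
    set x := q t with hx
    set v := q' t with hv
    have hterm : ∀ a : Fin n,
        HasDerivAt (fun u => (u^2 * L (q u) a + B (q u) a) * q' u a)
          (((2*t * L x a + t^2 * (∑ b, pd (fun y => L y a) b x * v b))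
            + (∑ b, pd (fun y => B y a) b x * v b)) * v a
           + (t^2 * L x a + B x a) * q'' t a) t := by
      intro a
      have hLa := hasDerivAt_comp_pd (hL a) (hq t)
      have hBa := hasDerivAt_comp_pd (hB a) (hq t)
      have h1 : HasDerivAt (fun u : ℝ => u^2) (2*t) t := by
        simpa using hasDerivAt_pow 2 t
      have hqa : HasDerivAt (fun u => q' u a) (q'' t a) t := (hasDerivAt_pi.mp (hq' t)) a
      exact ((h1.mul hLa).add hBa).mul hqa
    have hcube : HasDerivAt (fun u : ℝ => (s/3) * u^3) (s * t^2) t := by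
      have := (hasDerivAt_pow 3 t).const_mul (s/3)
      refine this.congr_deriv ?_
      push_cast
      ring
    have hWq := hasDerivAt_comp_pd hWc (hq t)
    have hlast : HasDerivAt (fun u : ℝ => u * W (q u))
        (1 * W x + t * ∑ b, pd W b x * v b) t :=
      (hasDerivAt_id t).mul hWq
    have hsum : HasDerivAt
        (fun u : ℝ => (∑ a, (u^2 * L (q u) a + B (q u) a) * q' u a) + (s/3) * u^3 + u * W (q u))
        ((∑ a, (((2*t * L x a + t^2 * (∑ b, pd (fun y => L y a) b x * v b))
            + (∑ b, pd (fun y => B y a) b x * v b)) * v a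
           + (t^2 * L x a + B x a) * q'' t a)) + s * t^2
          + (1 * W x + t * ∑ b, pd W b x * v b)) t :=
      ((HasDerivAt.fun_sum (fun a _ => hterm a)).add hcube).add hlast
    convert hsum using 1
    -- show 0 = total derivative
    have hpdW : ∀ b : Fin n, pd W b x = -2 * L x b := fun b => hBV x b
    have hexp : ∀ a : Fin n,
        ((2*t * L x a + t^2 * (∑ b, pd (fun y => L y a) b x * v b))
            + (∑ b, pd (fun y => B y a) b x * v b)) * v a
           + (t^2 * L x a + B x a) * q'' t a
        = 2*t * (L x a * v a) + t^2 * ((∑ b, pd (fun y => L y a) b x * v b) * v a)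
          + (∑ b, pd (fun y => B y a) b x * v b) * v a
          - t^2 * (L x a * pd V a x) - B x a * pd V a x := by
      intro a
      rw [heq t a]
      ring
    simp_rw [hexp, hpdW]
    rw [Finset.sum_sub_distrib, Finset.sum_sub_distrib, Finset.sum_add_distrib,
      Finset.sum_add_distrib, ← Finset.mul_sum, ← Finset.mul_sum, ← Finset.mul_sum,
      killing_contract_s4 L x v (fun a b => hLKV x a b),
      killing_contract_s4 B x v (fun a b => hBKV x a b),
      hLV x]
    have hWx : (∑ a, B x a * pd V a x) = W x := rfl
    rw [hWx]
    have h2 : (∑ b, -2 * L x b * v b) = -2 * ∑ b, L x b * v b := by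
      rw [Finset.mul_sum]; apply Finset.sum_congr rfl; intros; ring
    rw [h2]
    ring
  have hconst := is_const_of_deriv_eq_zero
    (fun t => (hI t).differentiableAt) (fun t => (hI t).deriv) t₁ t₂
  simpa [hIdef, hWdef] using hconst
end

section
/- Let C be the Killing tensor on ℝ² with components C_{11} = γ y² + 2α y + A, C_{12} = C_{21} = −γ x y − α x − β y + C₀, C_{22} = γ x² + 2β x + B for real constants γ, α, β, A, B, C₀. Then there exists a smooth vector field L : ℝ² → ℝ² with C_{ab} = ½(∂_a L_b + ∂_b L_a) for all a,b if and only if γ = 0. Moreover, when γ = 0 one may take L¹ = −2β y² + 2α x y + A x + a₈ y + a₁₁ and L² = −2α x² + 2β x y + a₁₀ x + B y + a₉ for any constants a₈, a₉, a₁₀, a₁₁ with a₈ + a₁₀ = 2C₀. -/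
lemma pd_eval {n : ℕ} {f : (Fin n → ℝ) → ℝ} {x : Fin n → ℝ} {f' : (Fin n → ℝ) →L[ℝ] ℝ}
    (h : HasFDerivAt f f' x) (a : Fin n) : pd f a x = f' (Pi.single a 1) := by
  rw [pd, h.fderiv]

/-- general quadratic in two variables -/
def Q (c20 c11 c02 c10 c01 c00 : ℝ) : (Fin 2 → ℝ) → ℝ :=
  fun y => c20*(y 0)^2 + c11*(y 0)*(y 1) + c02*(y 1)^2 + c10*(y 0) + c01*(y 1) + c00

lemma Q_hasFDerivAt (c20 c11 c02 c10 c01 c00 : ℝ) (x : Fin 2 → ℝ) :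
    HasFDerivAt (Q c20 c11 c02 c10 c01 c00)
      ((2*c20*x 0 + c11*x 1 + c10) • (ContinuousLinearMap.proj 0 : (Fin 2 → ℝ) →L[ℝ] ℝ)
        + (c11*x 0 + 2*c02*x 1 + c01) • (ContinuousLinearMap.proj 1 : (Fin 2 → ℝ) →L[ℝ] ℝ)) x := by
  have h0 : HasFDerivAt (fun y : Fin 2 → ℝ => y 0)
      (ContinuousLinearMap.proj 0 : (Fin 2 → ℝ) →L[ℝ] ℝ) x :=
    (ContinuousLinearMap.proj 0 : (Fin 2 → ℝ) →L[ℝ] ℝ).hasFDerivAt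
  have h1 : HasFDerivAt (fun y : Fin 2 → ℝ => y 1)
      (ContinuousLinearMap.proj 1 : (Fin 2 → ℝ) →L[ℝ] ℝ) x :=
    (ContinuousLinearMap.proj 1 : (Fin 2 → ℝ) →L[ℝ] ℝ).hasFDerivAt
  have h := ((((((h0.mul h0).const_mul c20).add ((h0.mul h1).const_mul c11)).add
      ((h1.mul h1).const_mul c02)).add (h0.const_mul c10)).add (h1.const_mul c01)).add_const c00
  have he : Q c20 c11 c02 c10 c01 c00 = fun y : Fin 2 → ℝ =>
      c20*((y 0)*(y 0)) + c11*((y 0)*(y 1)) + c02*((y 1)*(y 1)) + c10*(y 0) + c01*(y 1) + c00 := by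
    funext y; simp [Q]; try ring
  rw [he]
  refine h.congr_fderiv ?_
  ext v
  simp
  ring

lemma pd_Q0 (c20 c11 c02 c10 c01 c00 : ℝ) (x : Fin 2 → ℝ) :
    pd (Q c20 c11 c02 c10 c01 c00) 0 x = 2*c20*x 0 + c11*x 1 + c10 := by
  rw [pd_eval (Q_hasFDerivAt c20 c11 c02 c10 c01 c00 x)]
  have h : (0:Fin 2) ≠ 1 := by decide
  simp [Pi.single_eq_same, Pi.single_eq_of_ne h.symm]

lemma pd_Q1 (c20 c11 c02 c10 c01 c00 : ℝ) (x : Fin 2 → ℝ) :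
    pd (Q c20 c11 c02 c10 c01 c00) 1 x = c11*x 0 + 2*c02*x 1 + c01 := by
  rw [pd_eval (Q_hasFDerivAt c20 c11 c02 c10 c01 c00 x)]
  have h : (0:Fin 2) ≠ 1 := by decide
  simp [Pi.single_eq_same, Pi.single_eq_of_ne h]

lemma Q_contDiff (c20 c11 c02 c10 c01 c00 : ℝ) : ContDiff ℝ (⊤ : ℕ∞) (Q c20 c11 c02 c10 c01 c00) := by
  unfold Q; fun_prop

lemma pd_sub {n : ℕ} {u v : (Fin n → ℝ) → ℝ} (hu : Differentiable ℝ u) (hv : Differentiable ℝ v)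
    (a : Fin n) (x : Fin n → ℝ) :
    pd (fun y => u y - v y) a x = pd u a x - pd v a x := by
  unfold pd
  rw [fderiv_fun_sub (hu x) (hv x)]
  simp

lemma pd_comm {n : ℕ} {f : (Fin n → ℝ) → ℝ} (hf : ContDiff ℝ (⊤ : ℕ∞) f) (a b : Fin n) (x : Fin n → ℝ) :
    pd (pd f a) b x = pd (pd f b) a x := by
  have hd2 : DifferentiableAt ℝ (fderiv ℝ f) x :=
    ((hf.fderiv_right (m := (⊤ : ℕ∞)) (by simp)).differentiable (by simp)) x
  have key : ∀ c d : Fin n, pd (pd f c) d x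
      = fderiv ℝ (fderiv ℝ f) x (Pi.single d 1) (Pi.single c 1) := by
    intro c d
    show fderiv ℝ (fun y => fderiv ℝ f y (Pi.single c 1)) x (Pi.single d 1) = _
    rw [fderiv_clm_apply hd2 (differentiableAt_const _)]
    simp
  rw [key a b, key b a]
  exact (hf.contDiffAt.isSymmSndFDerivAt (by rw [minSmoothness_of_isRCLikeNormedField]; exact (WithTop.coe_le_coe.mpr le_top : ((2 : ℕ∞) : WithTop ℕ∞) ≤ ((⊤ : ℕ∞) : WithTop ℕ∞)))) _ _

theorem killingTensor_E2_reducible (γ α β A B C₀ : ℝ)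
    (C : (Fin 2 → ℝ) → Fin 2 → Fin 2 → ℝ)
    (hC : ∀ (p : Fin 2 → ℝ),
      C p 0 0 = γ * (p 1)^2 + 2 * α * p 1 + A ∧
      C p 0 1 = -(γ * p 0 * p 1) - α * p 0 - β * p 1 + C₀ ∧
      C p 1 0 = -(γ * p 0 * p 1) - α * p 0 - β * p 1 + C₀ ∧
      C p 1 1 = γ * (p 0)^2 + 2 * β * p 0 + B) :
    ((∃ L : (Fin 2 → ℝ) → Fin 2 → ℝ,
        (∀ a, ContDiff ℝ (⊤ : ℕ∞) fun x => L x a) ∧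
        (∀ x a b, C x a b
          = (1/2) * (pd (fun y => L y b) a x + pd (fun y => L y a) b x)))
      ↔ γ = 0)
    ∧ (γ = 0 → ∀ a₈ a₉ a₁₀ a₁₁ : ℝ, a₈ + a₁₀ = 2 * C₀ →
        ∀ x a b, C x a b
          = (1/2) * (pd (fun y =>
                ![(-2) * β * (y 1)^2 + 2 * α * y 0 * y 1 + A * y 0 + a₈ * y 1 + a₁₁,
                  (-2) * α * (y 0)^2 + 2 * β * y 0 * y 1 + a₁₀ * y 0 + B * y 1 + a₉] b) a x
            + pd (fun y =>
                ![(-2) * β * (y 1)^2 + 2 * α * y 0 * y 1 + A * y 0 + a₈ * y 1 + a₁₁,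
                  (-2) * α * (y 0)^2 + 2 * β * y 0 * y 1 + a₁₀ * y 0 + B * y 1 + a₉] a) b x)) := by
  have key : γ = 0 → ∀ a₈ a₉ a₁₀ a₁₁ : ℝ, a₈ + a₁₀ = 2 * C₀ →
      ∀ (x : Fin 2 → ℝ) (a b : Fin 2), C x a b
        = (1/2) * (pd (fun y =>
              ![(-2) * β * (y 1)^2 + 2 * α * y 0 * y 1 + A * y 0 + a₈ * y 1 + a₁₁,
                (-2) * α * (y 0)^2 + 2 * β * y 0 * y 1 + a₁₀ * y 0 + B * y 1 + a₉] b) a x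
          + pd (fun y =>
              ![(-2) * β * (y 1)^2 + 2 * α * y 0 * y 1 + A * y 0 + a₈ * y 1 + a₁₁,
                (-2) * α * (y 0)^2 + 2 * β * y 0 * y 1 + a₁₀ * y 0 + B * y 1 + a₉] a) b x) := by
    intro hγ a₈ a₉ a₁₀ a₁₁ hsum x a b
    obtain ⟨h00, h01, h10, h11⟩ := hC x
    have F0 : (fun y : Fin 2 → ℝ =>
        (-2) * β * (y 1)^2 + 2 * α * y 0 * y 1 + A * y 0 + a₈ * y 1 + a₁₁)
        = Q 0 (2*α) ((-2)*β) A a₈ a₁₁ := by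
      funext y; simp [Q]; try ring
    have F1 : (fun y : Fin 2 → ℝ =>
        (-2) * α * (y 0)^2 + 2 * β * y 0 * y 1 + a₁₀ * y 0 + B * y 1 + a₉)
        = Q ((-2)*α) (2*β) 0 a₁₀ B a₉ := by
      funext y; simp [Q]; try ring
    fin_cases a <;> fin_cases b <;>
      simp only [Fin.zero_eta, Fin.mk_one, Fin.isValue, Matrix.cons_val_zero,
        Matrix.cons_val_one, Matrix.head_cons, F0, F1, pd_Q0, pd_Q1,
        h00, h01, h10, h11, hγ] <;>
      linarith [hsum]
  refine ⟨⟨?_, ?_⟩, key⟩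
  · rintro ⟨L, hL, hrep⟩
    have hc0 : ContDiff ℝ (⊤ : ℕ∞) (fun y => L y 0) := hL 0
    have hc1 : ContDiff ℝ (⊤ : ℕ∞) (fun y => L y 1) := hL 1
    -- the three first-order relations
    have h00 : ∀ x, pd (fun y => L y 0) 0 x = γ * (x 1)^2 + 2 * α * x 1 + A := by
      intro x
      have h := hrep x 0 0
      have h' := (hC x).1
      linarith
    have h11 : ∀ x, pd (fun y => L y 1) 1 x = γ * (x 0)^2 + 2 * β * x 0 + B := by
      intro x
      have h := hrep x 1 1
      have h' := (hC x).2.2.2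
      linarith
    have hS : ∀ x, pd (fun y => L y 1) 0 x + pd (fun y => L y 0) 1 x
        = -2*(γ * x 0 * x 1) - 2*(α * x 0) - 2*(β * x 1) + 2*C₀ := by
      intro x
      have h := hrep x 0 1
      have h' := (hC x).2.1
      linarith
    have E00 : pd (fun y => L y 0) 0 = Q 0 0 γ 0 (2*α) A := by
      funext x; rw [h00]; simp [Q]; try ring
    have E11 : pd (fun y => L y 1) 1 = Q γ 0 0 (2*β) 0 B := by
      funext x; rw [h11]; simp [Q]; try ring
    have Ef01 : pd (fun y => L y 0) 1
        = fun x => Q 0 (-2*γ) 0 (-2*α) (-2*β) (2*C₀) x - pd (fun y => L y 1) 0 x := by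
      funext x
      have h := hS x
      simp only [Q]
      nlinarith [h]
    have hg : ContDiff ℝ (⊤ : ℕ∞) (pd (fun y => L y 1) 0) := pd_contDiff hc1 0
    -- second-order: ∂₀∂₀ L¹ is explicit
    have step1 : ∀ x, pd (pd (fun y => L y 1) 0) 0 x = -4*γ*x 1 - 4*α := by
      intro x
      have h := pd_comm hc0 0 1 x
      rw [E00, pd_Q1, Ef01,
        pd_sub ((Q_contDiff 0 (-2*γ) 0 (-2*α) (-2*β) (2*C₀)).differentiable (by simp))
          (hg.differentiable (by simp)), pd_Q0] at h
      linarith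
    have step2 : ∀ x, pd (pd (fun y => L y 1) 0) 1 x = 2*γ*x 0 + 2*β := by
      intro x
      have h := pd_comm hc1 0 1 x
      rw [E11, pd_Q0] at h
      rw [h]; ring
    have Eg0 : pd (pd (fun y => L y 1) 0) 0 = Q 0 0 0 0 (-4*γ) (-4*α) := by
      funext x; rw [step1]; simp [Q]; try ring
    have Eg1 : pd (pd (fun y => L y 1) 0) 1 = Q 0 0 0 (2*γ) 0 (2*β) := by
      funext x; rw [step2]; simp [Q]; try ring
    have hfin := pd_comm hg 0 1 (fun _ => 0)
    rw [Eg0, Eg1, pd_Q1, pd_Q0] at hfin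
    simp at hfin
    linarith
  · intro hγ
    refine ⟨fun y => ![(-2) * β * (y 1)^2 + 2 * α * y 0 * y 1 + A * y 0 + C₀ * y 1 + 0,
        (-2) * α * (y 0)^2 + 2 * β * y 0 * y 1 + C₀ * y 0 + B * y 1 + 0], ?_, ?_⟩
    · intro a
      fin_cases a <;>
        simp only [Fin.zero_eta, Fin.mk_one, Fin.isValue, Matrix.cons_val_zero,
          Matrix.cons_val_one, Matrix.head_cons] <;>
        fun_prop
    · intro x a b
      exact key hγ C₀ 0 C₀ 0 (by ring) x a b
end

section
/- Let k ≠ 0 be real and let q : ℝ → ℝ³ be a twice-differentiable curve with q̈(t) = 2k q(t) for all t (the system with potential V = −k‖q‖²). Then for every pair of indices i, j ∈ Fin 3, the function B_{ij}(t) = q̇_i(t) q̇_j(t) − 2k q_i(t) q_j(t) is constant. -/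
/-!
Each component of `q` solves the scalar equation `x'' = c x` with `c = 2k`, and for any two
solutions `x`, `y` one has `(x' y' - c x y)' = c x y' + c x' y - c x' y - c x y' = 0`.
-/

section

variable {𝕜 : Type*} [RCLike 𝕜] {c : 𝕜} {x y u v : 𝕜 → 𝕜}

theorem hasDerivAt_mul_sub_mul_of_second_deriv_eq_mul {t : 𝕜}
    (hx : HasDerivAt x (u t) t) (hy : HasDerivAt y (v t) t)
    (hu : HasDerivAt u (c * x t) t) (hv : HasDerivAt v (c * y t) t) :
    HasDerivAt (fun s => u s * v s - c * x s * y s) 0 t := by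
  refine ((hu.mul hv).sub ((hx.const_mul c).mul hy)).congr_deriv ?_
  ring

theorem mul_sub_mul_eq_of_second_deriv_eq_mul
    (hx : ∀ t, HasDerivAt x (u t) t) (hy : ∀ t, HasDerivAt y (v t) t)
    (hu : ∀ t, HasDerivAt u (c * x t) t) (hv : ∀ t, HasDerivAt v (c * y t) t) (t₁ t₂ : 𝕜) :
    u t₁ * v t₁ - c * x t₁ * y t₁ = u t₂ * v t₂ - c * x t₂ * y t₂ := by
  have hB := fun t => hasDerivAt_mul_sub_mul_of_second_deriv_eq_mul (hx t) (hy t) (hu t) (hv t)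
  exact is_const_of_deriv_eq_zero (fun t => (hB t).differentiableAt) (fun t => (hB t).deriv) t₁ t₂

end

theorem jauchHillFradkin_conserved_general (k : ℝ)
    (q q' q'' : ℝ → Fin 3 → ℝ)
    (hq : ∀ t, HasDerivAt q (q' t) t) (hq' : ∀ t, HasDerivAt q' (q'' t) t)
    (heq : ∀ t, q'' t = (2 * k) • q t) :
    ∀ (i j : Fin 3) (t₁ t₂ : ℝ),
      q' t₁ i * q' t₁ j - 2 * k * q t₁ i * q t₁ j
        = q' t₂ i * q' t₂ j - 2 * k * q t₂ i * q t₂ j := by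
  have hpos (m : Fin 3) (t : ℝ) : HasDerivAt (fun s => q s m) (q' t m) t :=
    hasDerivAt_pi.mp (hq t) m
  have hvel (m : Fin 3) (t : ℝ) : HasDerivAt (fun s => q' s m) (2 * k * q t m) t := by
    simpa [heq t] using hasDerivAt_pi.mp (hq' t) m
  intro i j
  exact mul_sub_mul_eq_of_second_deriv_eq_mul (hpos i) (hpos j) (hvel i) (hvel j)

theorem jauchHillFradkin_conserved (k : ℝ) (hk : k ≠ 0)
    (q q' q'' : ℝ → Fin 3 → ℝ)
    (hq : ∀ t, HasDerivAt q (q' t) t) (hq' : ∀ t, HasDerivAt q' (q'' t) t)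
    (heq : ∀ t, q'' t = (2 * k) • q t) :
    ∀ (i j : Fin 3) (t₁ t₂ : ℝ),
      q' t₁ i * q' t₁ j - 2 * k * q t₁ i * q t₁ j
        = q' t₂ i * q' t₂ j - 2 * k * q t₂ i * q t₂ j :=
  jauchHillFradkin_conserved_general k q q' q'' hq hq' heq
end

section
/- Let k ≠ 0 be real and let q : I → ℝ³ be a twice-differentiable curve on a real interval I with q(t) ≠ 0 and q̈(t) = −2k q(t)/‖q(t)‖⁴ for all t ∈ I (the system with potential V = −k/‖q‖²). Let H(t) = ½‖q̇(t)‖² − k/‖q(t)‖². Then both functions I₁(t) = −H(t) t² + t ⟨q(t), q̇(t)⟩ − ½‖q(t)‖² and I₂(t) = −H(t) t + ½ ⟨q(t), q̇(t)⟩ are constant on I. -/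
/-!
For the potential `-k/‖q‖²`, homogeneous of degree `-2`, the virial identity reads
`d/dt ⟨q, q̇⟩ = ‖q̇‖² + ⟨q, q̈⟩ = 2H`, while `d/dt ‖q‖² = 2⟨q, q̇⟩` and `H` is conserved.
Integrating twice gives `½⟨q, q̇⟩ = Ht + I₂` and `½‖q‖² = Ht² + 2I₂t − I₁` with constant `I₁`, `I₂`.
-/

open RealInnerProductSpace

theorem Convex.eq_of_forall_hasDerivWithinAt_zero {F : Type*} [NormedAddCommGroup F]
    [NormedSpace ℝ F] {s : Set ℝ} (hs : Convex ℝ s) {f : ℝ → F}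
    (hf : ∀ t ∈ s, HasDerivWithinAt f 0 s t) {x y : ℝ} (hx : x ∈ s) (hy : y ∈ s) :
    f x = f y := by
  have h := hs.norm_image_sub_le_of_norm_hasDerivWithin_le (C := 0) hf
    (fun _ _ => norm_zero.le) hx hy
  rw [zero_mul, norm_le_zero_iff, sub_eq_zero] at h
  exact h.symm

section AffineQuadratic

variable {s : Set ℝ} {H A R : ℝ → ℝ} {t : ℝ}

theorem hasDerivWithinAt_affine_constTerm_zero (hH : HasDerivWithinAt H 0 s t)
    (hA : HasDerivWithinAt A (2 * H t) s t) :
    HasDerivWithinAt (fun t => -H t * t + 1 / 2 * A t) 0 s t := by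
  refine ((hH.neg.mul (hasDerivWithinAt_id t s)).add (hA.const_mul (1 / 2))).congr_deriv ?_
  simp only [id, Pi.neg_apply]
  ring

theorem hasDerivWithinAt_quadratic_constTerm_zero (hH : HasDerivWithinAt H 0 s t)
    (hA : HasDerivWithinAt A (2 * H t) s t) (hR : HasDerivWithinAt R (2 * A t) s t) :
    HasDerivWithinAt (fun t => -H t * t ^ 2 + t * A t - 1 / 2 * R t) 0 s t := by
  refine (((hH.neg.mul ((hasDerivWithinAt_id t s).pow 2)).add
    ((hasDerivWithinAt_id t s).mul hA)).sub (hR.const_mul (1 / 2))).congr_deriv ?_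
  simp only [id, Pi.neg_apply]
  ring

end AffineQuadratic

namespace InverseSquare

variable {E : Type*} [NormedAddCommGroup E] [InnerProductSpace ℝ E]

noncomputable def energy (k : ℝ) (x v : E) : ℝ := 1 / 2 * ‖v‖ ^ 2 - k / ‖x‖ ^ 2

variable {k : ℝ} {s : Set ℝ} {q q' q'' : ℝ → E} {t : ℝ}

theorem hasDerivWithinAt_energy (hq : HasDerivWithinAt q (q' t) s t)
    (hq' : HasDerivWithinAt q' (q'' t) s t) (hq0 : q t ≠ 0)
    (heq : q'' t = (-(2 * k / ‖q t‖ ^ 4)) • q t) :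
    HasDerivWithinAt (fun t => energy k (q t) (q' t)) 0 s t := by
  have hr : ‖q t‖ ^ 2 ≠ 0 := by positivity
  refine ((hq'.norm_sq.const_mul (1 / 2)).sub
    ((hasDerivWithinAt_const t s k).div hq.norm_sq hr)).congr_deriv ?_
  rw [heq, inner_smul_right, real_inner_comm]
  field_simp
  ring

theorem hasDerivWithinAt_inner_eq_two_mul_energy (hq : HasDerivWithinAt q (q' t) s t)
    (hq' : HasDerivWithinAt q' (q'' t) s t) (hq0 : q t ≠ 0)
    (heq : q'' t = (-(2 * k / ‖q t‖ ^ 4)) • q t) :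
    HasDerivWithinAt (fun t => ⟪q t, q' t⟫) (2 * energy k (q t) (q' t)) s t := by
  have hr : ‖q t‖ ≠ 0 := norm_ne_zero_iff.mpr hq0
  refine (hq.inner ℝ hq').congr_deriv ?_
  rw [heq, inner_smul_right, real_inner_self_eq_norm_sq, real_inner_self_eq_norm_sq, energy]
  field_simp
  ring

end InverseSquare

open InverseSquare in
theorem ell_two_time_dependent_integrals_general (k : ℝ)
    (I : Set ℝ) (hI : Convex ℝ I)
    (q q' q'' : ℝ → EuclideanSpace ℝ (Fin 3))
    (hq : ∀ t ∈ I, HasDerivWithinAt q (q' t) I t)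
    (hq' : ∀ t ∈ I, HasDerivWithinAt q' (q'' t) I t)
    (hq0 : ∀ t ∈ I, q t ≠ 0)
    (heq : ∀ t ∈ I, q'' t = (-(2 * k / ‖q t‖^4)) • q t)
    (H : ℝ → ℝ) (hH : ∀ t, H t = (1/2) * ‖q' t‖^2 - k / ‖q t‖^2) :
    (∀ t₁ ∈ I, ∀ t₂ ∈ I,
        -(H t₁) * t₁^2 + t₁ * (inner ℝ (q t₁) (q' t₁) : ℝ) - (1/2) * ‖q t₁‖^2
          = -(H t₂) * t₂^2 + t₂ * (inner ℝ (q t₂) (q' t₂) : ℝ) - (1/2) * ‖q t₂‖^2)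
    ∧ (∀ t₁ ∈ I, ∀ t₂ ∈ I,
        -(H t₁) * t₁ + (1/2) * (inner ℝ (q t₁) (q' t₁) : ℝ)
          = -(H t₂) * t₂ + (1/2) * (inner ℝ (q t₂) (q' t₂) : ℝ)) := by
  obtain rfl : H = fun t => energy k (q t) (q' t) := funext hH
  have hH' t (ht : t ∈ I) := hasDerivWithinAt_energy (hq t ht) (hq' t ht) (hq0 t ht) (heq t ht)
  have hA' t (ht : t ∈ I) :=
    hasDerivWithinAt_inner_eq_two_mul_energy (hq t ht) (hq' t ht) (hq0 t ht) (heq t ht)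
  exact ⟨fun t₁ h₁ t₂ h₂ => hI.eq_of_forall_hasDerivWithinAt_zero
      (fun t ht => hasDerivWithinAt_quadratic_constTerm_zero (hH' t ht) (hA' t ht)
        (hq t ht).norm_sq) h₁ h₂,
    fun t₁ h₁ t₂ h₂ => hI.eq_of_forall_hasDerivWithinAt_zero
      (fun t ht => hasDerivWithinAt_affine_constTerm_zero (hH' t ht) (hA' t ht)) h₁ h₂⟩

theorem ell_two_time_dependent_integrals (k : ℝ) (hk : k ≠ 0)
    (I : Set ℝ) (hI : Convex ℝ I)
    (q q' q'' : ℝ → EuclideanSpace ℝ (Fin 3))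
    (hq : ∀ t ∈ I, HasDerivWithinAt q (q' t) I t)
    (hq' : ∀ t ∈ I, HasDerivWithinAt q' (q'' t) I t)
    (hq0 : ∀ t ∈ I, q t ≠ 0)
    (heq : ∀ t ∈ I, q'' t = (-(2 * k / ‖q t‖^4)) • q t)
    (H : ℝ → ℝ) (hH : ∀ t, H t = (1/2) * ‖q' t‖^2 - k / ‖q t‖^2) :
    (∀ t₁ ∈ I, ∀ t₂ ∈ I,
        -(H t₁) * t₁^2 + t₁ * (inner ℝ (q t₁) (q' t₁) : ℝ) - (1/2) * ‖q t₁‖^2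
          = -(H t₂) * t₂^2 + t₂ * (inner ℝ (q t₂) (q' t₂) : ℝ) - (1/2) * ‖q t₂‖^2)
    ∧ (∀ t₁ ∈ I, ∀ t₂ ∈ I,
        -(H t₁) * t₁ + (1/2) * (inner ℝ (q t₁) (q' t₁) : ℝ)
          = -(H t₂) * t₂ + (1/2) * (inner ℝ (q t₂) (q' t₂) : ℝ)) :=
  ell_two_time_dependent_integrals_general k I hI q q' q'' hq hq' hq0 heq H hH
end
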